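/- (Theorem 2.1, continuous dependence, maximally extended case.) Let Λ be a metric space, λ₀ ∈ Λ, and F : C([a,b],E) × Λ → C([a,b],E) be such that F(·,λ) is a Volterra operator for each λ ∈ Λ. Assume: (1) there is a neighborhood U₀ of λ₀ on which the family {F(·,λ)}_{λ∈U₀} is uniformly locally contracting with constant q < 1; (2) for every y ∈ C([a,b],E), the map F is continuous at (y, λ₀). If the equation y = F(y,λ₀) has a maximally extended solution y₀ defined on [a,a+ζ) for some ζ ∈ (0, b−a], then for every γ ∈ (0, ζ) there exists a neighborhood U of λ₀ such that for every λ ∈ U the equation y = F(y,λ) has a local solution y_γ(λ) on [a,a+γ], and sup_{t∈[a,a+γ]} ‖y_γ(λ)(t) − y₀(t)‖ → 0 as λ → λ₀. -/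

import Mathlib

open Set Filter Topology

noncomputable section

variable {E : Type*} [NormedAddCommGroup E] [NormedSpace ℝ E] [CompleteSpace E]

/-- The partial sup-norm `‖y‖_ξ = sup_{t ∈ [a, a+ξ]} ‖y t‖` on `C([a,b], E)`. -/
def partNorm (a b ξ : ℝ) (y : C(Set.Icc a b, E)) : ℝ :=
  sSup ((fun t : Set.Icc a b => ‖y t‖) '' {t : Set.Icc a b | (t : ℝ) ≤ a + ξ})

/-- `y₁` and `y₂` agree on `[a, a+ξ]`. -/
def eqUpTo (a b ξ : ℝ) (y₁ y₂ : C(Set.Icc a b, E)) : Prop :=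
  ∀ t : Set.Icc a b, (t : ℝ) ≤ a + ξ → y₁ t = y₂ t

/-- A Volterra operator on `C([a,b], E)` (in the sense of Tikhonov). -/
def IsVolterra (a b : ℝ) (Ψ : C(Set.Icc a b, E) → C(Set.Icc a b, E)) : Prop :=
  ∀ ξ ∈ Set.Ioo (0:ℝ) (b - a), ∀ y₁ y₂ : C(Set.Icc a b, E),
    eqUpTo a b ξ y₁ y₂ → eqUpTo a b ξ (Ψ y₁) (Ψ y₂)

/-- A locally contracting operator with contraction constant `q`. -/
def IsLocallyContracting (a b q : ℝ) (Ψ : C(Set.Icc a b, E) → C(Set.Icc a b, E)) : Prop :=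
  ∀ r > (0:ℝ), ∃ δ > (0:ℝ), ∀ y₁ y₂ : C(Set.Icc a b, E),
    partNorm a b (b - a) y₁ ≤ r → partNorm a b (b - a) y₂ ≤ r →
      (partNorm a b δ (Ψ y₁ - Ψ y₂) ≤ q * partNorm a b δ (y₁ - y₂)) ∧
      (∀ γ ∈ Set.Ioc (0:ℝ) (b - a - δ), eqUpTo a b γ y₁ y₂ →
        partNorm a b (γ + δ) (Ψ y₁ - Ψ y₂) ≤ q * partNorm a b (γ + δ) (y₁ - y₂))

/-- A local solution of `y = Ψ y` on `[a, a+γ]`: a function continuous on `[a, a+γ]`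
admitting a continuous extension `y ∈ C([a,b], E)` with `(Ψ y) t = g t` on `[a, a+γ]`. -/
def IsLocalSolution (a b γ : ℝ) (Ψ : C(Set.Icc a b, E) → C(Set.Icc a b, E))
    (g : ℝ → E) : Prop :=
  0 < γ ∧ γ ≤ b - a ∧ ContinuousOn g (Set.Icc a (a + γ)) ∧
  ∃ y : C(Set.Icc a b, E),
    (∀ t : Set.Icc a b, (t : ℝ) ≤ a + γ → y t = g t) ∧
    (∀ t : Set.Icc a b, (t : ℝ) ≤ a + γ → Ψ y t = g t)

/-- A maximally extended solution of `y = Ψ y` on `[a, a+ζ)`. -/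
def IsMaxExtSolution (a b ζ : ℝ) (Ψ : C(Set.Icc a b, E) → C(Set.Icc a b, E))
    (g : ℝ → E) : Prop :=
  0 < ζ ∧ ζ ≤ b - a ∧ (∀ γ ∈ Set.Ioo (0:ℝ) ζ, IsLocalSolution a b γ Ψ g) ∧
  Tendsto (fun γ => sSup ((fun t => ‖g t‖) '' Set.Icc a (a + γ))) (𝓝[<] ζ) atTop

/-- A family of Volterra operators, uniformly locally contracting on `Λ₀` with constant `q`. -/
def IsUniformlyLocallyContracting {Λ : Type*} (a b q : ℝ) (Λ₀ : Set Λ)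
    (F : C(Set.Icc a b, E) → Λ → C(Set.Icc a b, E)) : Prop :=
  ∀ r > (0:ℝ), ∃ δ > (0:ℝ), ∀ lam ∈ Λ₀, ∀ y₁ y₂ : C(Set.Icc a b, E),
    partNorm a b (b - a) y₁ ≤ r → partNorm a b (b - a) y₂ ≤ r →
      (partNorm a b δ (F y₁ lam - F y₂ lam) ≤ q * partNorm a b δ (y₁ - y₂)) ∧
      (∀ γ ∈ Set.Ioc (0:ℝ) (b - a - δ), eqUpTo a b γ y₁ y₂ →
        partNorm a b (γ + δ) (F y₁ lam - F y₂ lam) ≤ q * partNorm a b (γ + δ) (y₁ - y₂))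

/-
Solutions for `λ` near `λ₀` are built window by window. If `[a, a+s]` is already solved and
`s ≤ τ ≤ s + δ`, then `y ↦ F(y, λ)`, frozen after `a + τ`, is a `q`-contraction among functions of
norm `≤ r` that agree with the previous solution on `[a, a+s]`, so its fixed point lies within
`d / (1 - q)` of any starting point with defect `d`. Start from the previous solution plus the
increment of `y₀` between `a + s` and `a + τ`: its defect tends to `0` as `λ → λ₀` by continuity of
`F` at `λ₀`, so the new solutions converge to `y₀` on `[a, a+τ]`. Finitely many windows of length
`δ` cover `[a, a+γ]`.
-/

theorem exists_fixedPoint_near {α : Type*} [MetricSpace α] [CompleteSpace α] {f : α → α}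
    {s : Set α} (hs : IsClosed s) (hfs : MapsTo f s s) {x₀ : α} (hx₀ : x₀ ∈ s) {K ρ : ℝ}
    (hK0 : 0 ≤ K) (hK1 : K < 1)
    (hf : ∀ x ∈ s, ∀ y ∈ s, dist x x₀ ≤ ρ → dist y x₀ ≤ ρ → dist (f x) (f y) ≤ K * dist x y)
    (hρ : dist (f x₀) x₀ ≤ (1 - K) * ρ) :
    ∃ z, f z = z ∧ dist z x₀ ≤ dist (f x₀) x₀ / (1 - K) := by
  have hρ0 : 0 ≤ ρ := (mul_nonneg_iff_of_pos_left (by linarith)).1 (dist_nonneg.trans hρ)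
  set t := s ∩ Metric.closedBall x₀ ρ
  have hx₀t : x₀ ∈ t := ⟨hx₀, Metric.mem_closedBall_self hρ0⟩
  have hft : MapsTo f t t := fun x hx => ⟨hfs hx.1, by
    calc dist (f x) x₀ ≤ dist (f x) (f x₀) + dist (f x₀) x₀ := dist_triangle _ _ _
      _ ≤ K * ρ + (1 - K) * ρ := by
        gcongr
        exact (hf x hx.1 x₀ hx₀ hx.2 hx₀t.2).trans
          (by simpa using mul_le_mul_of_nonneg_left hx.2 hK0)
      _ = ρ := by ring⟩
  have : IsClosed t := hs.inter Metric.isClosed_closedBall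
  have := this.completeSpace_coe
  have : Nonempty t := ⟨⟨x₀, hx₀t⟩⟩
  have hg : ContractingWith K.toNNReal (hft.restrict f t t) :=
    ⟨Real.toNNReal_lt_one.2 hK1, LipschitzWith.of_dist_le_mul fun x y => by
      rw [Real.coe_toNNReal _ hK0]
      exact hf x x.2.1 y y.2.1 x.2.2 y.2.2⟩
  refine ⟨_, congrArg Subtype.val hg.fixedPoint_isFixedPt, ?_⟩
  have := hg.dist_fixedPoint_le ⟨x₀, hx₀t⟩
  rw [Subtype.dist_eq, Subtype.dist_eq, Real.coe_toNNReal _ hK0] at this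
  simpa only [dist_comm, MapsTo.val_restrict_apply] using this

theorem forall_mem_Ioc_of_step {P : ℝ → Prop} {δ γ : ℝ} (hδ : 0 < δ)
    (hstep : ∀ s τ, 0 ≤ s → s ≤ τ → τ ≤ s + δ → τ ∈ Ioc 0 γ → (s = 0 ∨ P s) → P τ) :
    ∀ τ ∈ Ioc 0 γ, P τ := by
  suffices h : ∀ n : ℕ, ∀ τ ∈ Ioc 0 γ, τ ≤ n * δ → P τ by
    intro τ hτ
    obtain ⟨n, hn⟩ := exists_nat_ge (τ / δ)
    exact h n τ hτ ((div_le_iff₀ hδ).1 hn)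
  intro n
  induction n with
  | zero =>
    intro τ hτ hτn
    rw [Nat.cast_zero, zero_mul] at hτn
    linarith [hτ.1]
  | succ n ih =>
    intro τ hτ hτn
    rcases le_or_gt τ δ with hτδ | hδτ
    · exact hstep 0 τ le_rfl hτ.1.le (by linarith) hτ (Or.inl rfl)
    · refine hstep (τ - δ) τ (by linarith) (by linarith) (by linarith) hτ (Or.inr ?_)
      exact ih _ ⟨by linarith, by linarith [hτ.2]⟩ (by push_cast at hτn; linarith)

section PartNorm

omit [NormedSpace ℝ E] [CompleteSpace E]

variable {a b ξ : ℝ}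

theorem norm_le_partNorm (y : C(Icc a b, E)) {t : Icc a b} (ht : (t : ℝ) ≤ a + ξ) :
    ‖y t‖ ≤ partNorm a b ξ y :=
  le_csSup ⟨‖y‖, by rintro _ ⟨u, -, rfl⟩; exact y.norm_coe_le_norm u⟩ ⟨t, ht, rfl⟩

theorem partNorm_le {y : C(Icc a b, E)} {c : ℝ} (hc : 0 ≤ c)
    (h : ∀ t : Icc a b, (t : ℝ) ≤ a + ξ → ‖y t‖ ≤ c) : partNorm a b ξ y ≤ c :=
  Real.sSup_le (by rintro _ ⟨t, ht, rfl⟩; exact h t ht) hc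

theorem partNorm_nonneg (y : C(Icc a b, E)) : 0 ≤ partNorm a b ξ y :=
  Real.sSup_nonneg (by rintro _ ⟨t, -, rfl⟩; exact norm_nonneg _)

theorem partNorm_le_norm (y : C(Icc a b, E)) : partNorm a b ξ y ≤ ‖y‖ :=
  partNorm_le (norm_nonneg y) fun t _ => y.norm_coe_le_norm t

theorem partNorm_mono {ξ' : ℝ} (h : ξ ≤ ξ') (y : C(Icc a b, E)) :
    partNorm a b ξ y ≤ partNorm a b ξ' y :=
  partNorm_le (partNorm_nonneg y) fun _ ht => norm_le_partNorm y (ht.trans (by linarith))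

theorem partNorm_congr {y z : C(Icc a b, E)} (h : eqUpTo a b ξ y z) :
    partNorm a b ξ y = partNorm a b ξ z := by
  unfold partNorm
  rw [image_congr fun t ht => by rw [h t ht]]

theorem partNorm_min_sub (y : C(Icc a b, E)) :
    partNorm a b (min ξ (b - a)) y = partNorm a b ξ y := by
  unfold partNorm
  congr 2
  ext t
  simp only [mem_ofPred_eq]
  have := t.2.2
  constructor <;> intro h
  · linarith [min_le_left ξ (b - a)]
  · rw [← min_add_add_left]
    exact le_min h (by linarith)

theorem eqUpTo.mono {ξ' : ℝ} {y z : C(Icc a b, E)} (h : eqUpTo a b ξ y z) (h' : ξ' ≤ ξ) :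
    eqUpTo a b ξ' y z :=
  fun t ht => h t (ht.trans (by linarith))

theorem isClosed_setOf_eqUpTo (v : C(Icc a b, E)) : IsClosed {y | eqUpTo a b ξ y v} := by
  have : {y | eqUpTo a b ξ y v} = ⋂ t ∈ {t : Icc a b | (t : ℝ) ≤ a + ξ}, {y | y t = v t} := by
    ext y; simp [eqUpTo]
  rw [this]
  exact isClosed_biInter fun t _ => isClosed_eq (continuous_eval_const t) continuous_const

end PartNorm

section Stopping

omit [NormedSpace ℝ E] [CompleteSpace E]

variable {a b τ : ℝ}

def clampAt (τ : ℝ) : C(Icc a b, Icc a b) where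
  toFun t := ⟨max a (min t (a + τ)), le_max_left _ _,
    max_le (t.2.1.trans t.2.2) ((min_le_left _ _).trans t.2.2)⟩
  continuous_toFun := by fun_prop

theorem clampAt_of_le {t : Icc a b} (ht : (t : ℝ) ≤ a + τ) : clampAt τ t = t :=
  Subtype.ext (by simp [clampAt, min_eq_left ht, t.2.1])

theorem coe_clampAt_le (hτ : 0 ≤ τ) (t : Icc a b) : (clampAt τ t : ℝ) ≤ a + τ :=
  max_le (by linarith) (min_le_right _ _)

def stopAt (τ : ℝ) (y : C(Icc a b, E)) : C(Icc a b, E) :=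
  y.comp (clampAt τ)

theorem stopAt_apply_of_le (y : C(Icc a b, E)) {t : Icc a b} (ht : (t : ℝ) ≤ a + τ) :
    stopAt τ y t = y t :=
  congrArg y (clampAt_of_le ht)

theorem stopAt_sub (y z : C(Icc a b, E)) : stopAt τ (y - z) = stopAt τ y - stopAt τ z :=
  rfl

theorem continuous_stopAt : Continuous (stopAt (a := a) (b := b) (E := E) τ) :=
  ContinuousMap.continuous_precomp _

theorem stopAt_congr (hτ : 0 ≤ τ) {y z : C(Icc a b, E)} (h : eqUpTo a b τ y z) :
    stopAt τ y = stopAt τ z :=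
  ContinuousMap.ext fun t => h _ (coe_clampAt_le hτ t)

theorem norm_stopAt_le_partNorm (hτ : 0 ≤ τ) (y : C(Icc a b, E)) :
    ‖stopAt τ y‖ ≤ partNorm a b τ y :=
  (ContinuousMap.norm_le _ (partNorm_nonneg y)).2 fun t => norm_le_partNorm y (coe_clampAt_le hτ t)

theorem norm_stopAt_le (hτ : 0 ≤ τ) (y : C(Icc a b, E)) : ‖stopAt τ y‖ ≤ ‖y‖ :=
  (norm_stopAt_le_partNorm hτ y).trans (partNorm_le_norm y)

end Stopping

section Contraction

omit [NormedSpace ℝ E] [CompleteSpace E]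

variable {a b r q s τ : ℝ}

/-- For `s = 0` no agreement is required, as in (q1): `eqUpTo a b 0` would still demand agreement
at `a`. -/
def ContractsOnWindow (Ψ : C(Icc a b, E) → C(Icc a b, E)) (r q s τ : ℝ) : Prop :=
  ∀ y₁ y₂, ‖y₁‖ ≤ r → ‖y₂‖ ≤ r → (s = 0 ∨ eqUpTo a b s y₁ y₂) →
    partNorm a b τ (Ψ y₁ - Ψ y₂) ≤ q * partNorm a b τ (y₁ - y₂)

variable {Λ : Type*} {U₀ : Set Λ} {F : C(Icc a b, E) → Λ → C(Icc a b, E)}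

theorem IsUniformlyLocallyContracting.mono {q' : ℝ}
    (h : IsUniformlyLocallyContracting a b q U₀ F) (hqq' : q ≤ q') :
    IsUniformlyLocallyContracting a b q' U₀ F := by
  intro r hr
  obtain ⟨δ, hδ, H⟩ := h r hr
  refine ⟨δ, hδ, fun lam hlam y₁ y₂ h₁ h₂ => ?_⟩
  obtain ⟨H₁, H₂⟩ := H lam hlam y₁ y₂ h₁ h₂
  exact ⟨H₁.trans (by gcongr; exact partNorm_nonneg _),
    fun γ hγ he => (H₂ γ hγ he).trans (by gcongr; exact partNorm_nonneg _)⟩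

theorem IsUniformlyLocallyContracting.exists_partNorm_add_le
    (h : IsUniformlyLocallyContracting a b q U₀ F) (hr : 0 < r) :
    ∃ δ > 0, ∀ lam ∈ U₀, ∀ y₁ y₂ : C(Icc a b, E), ‖y₁‖ ≤ r → ‖y₂‖ ≤ r →
      ∀ s, 0 ≤ s → (s = 0 ∨ eqUpTo a b s y₁ y₂) →
        partNorm a b (s + δ) (F y₁ lam - F y₂ lam) ≤ q * partNorm a b (s + δ) (y₁ - y₂) := by
  obtain ⟨δ, hδ, H⟩ := h r hr
  refine ⟨δ, hδ, fun lam hlam y₁ y₂ h₁ h₂ s hs hagree => ?_⟩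
  obtain ⟨H₁, H₂⟩ :=
    H lam hlam y₁ y₂ ((partNorm_le_norm y₁).trans h₁) ((partNorm_le_norm y₂).trans h₂)
  by_cases hcase : s = 0 ∨ b - a ≤ δ
  · have hδ_eq : ∀ y : C(Icc a b, E), partNorm a b (s + δ) y = partNorm a b δ y := by
      rcases hcase with rfl | hba
      · simp
      · intro y
        rw [← partNorm_min_sub, ← partNorm_min_sub (ξ := δ), min_eq_right (by linarith),
          min_eq_right hba]
    simpa only [hδ_eq] using H₁
  · push Not at hcase
    -- (q2) applies at `min s (b - a - δ)`, whose window ends at `min (s + δ) (b - a)`.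
    have hs' : 0 < min s (b - a - δ) := lt_min (lt_of_le_of_ne hs (Ne.symm hcase.1)) (by linarith)
    have := H₂ _ ⟨hs', min_le_right _ _⟩ ((hagree.resolve_left hcase.1).mono (min_le_left _ _))
    rwa [← min_add_add_right, sub_add_cancel, partNorm_min_sub, partNorm_min_sub] at this

theorem IsUniformlyLocallyContracting.exists_contractsOnWindow
    (h : IsUniformlyLocallyContracting a b q U₀ F) (hVol : ∀ lam, IsVolterra a b (F · lam))
    (hq : 0 ≤ q) (hr : 0 < r) :
    ∃ δ > 0, ∀ lam ∈ U₀, ∀ s τ, 0 ≤ s → s ≤ τ → τ ≤ s + δ → 0 < τ → τ < b - a →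
      ContractsOnWindow (F · lam) r q s τ := by
  obtain ⟨δ, hδ, H⟩ := h.exists_partNorm_add_le hr
  refine ⟨δ, hδ, fun lam hlam s τ hs hsτ hτs hτ0 hτb y₁ y₂ h₁ h₂ hagree => ?_⟩
  -- Freezing `yᵢ` after `a + τ` leaves `F yᵢ lam` unchanged on `[a, a+τ]` (Volterra), and the
  -- frozen difference is no larger on `[a, a+s+δ]` than on `[a, a+τ]`.
  have hF : ∀ y, eqUpTo a b τ (F (stopAt τ y) lam) (F y lam) := fun y =>
    hVol lam τ ⟨hτ0, hτb⟩ _ _ fun t ht => stopAt_apply_of_le y ht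
  have hagree' : s = 0 ∨ eqUpTo a b s (stopAt τ y₁) (stopAt τ y₂) :=
    hagree.imp_right fun he t ht => by
      rw [stopAt_apply_of_le _ (ht.trans (by linarith)),
        stopAt_apply_of_le _ (ht.trans (by linarith)), he t ht]
  calc partNorm a b τ (F y₁ lam - F y₂ lam)
      = partNorm a b τ (F (stopAt τ y₁) lam - F (stopAt τ y₂) lam) :=
        partNorm_congr fun t ht => by simp only [ContinuousMap.sub_apply, hF y₁ t ht, hF y₂ t ht]
    _ ≤ partNorm a b (s + δ) (F (stopAt τ y₁) lam - F (stopAt τ y₂) lam) := partNorm_mono hτs _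
    _ ≤ q * partNorm a b (s + δ) (stopAt τ y₁ - stopAt τ y₂) :=
        H lam hlam _ _ ((norm_stopAt_le hτ0.le y₁).trans h₁) ((norm_stopAt_le hτ0.le y₂).trans h₂)
          s hs hagree'
    _ ≤ q * partNorm a b τ (y₁ - y₂) := by
        gcongr
        rw [← stopAt_sub]
        exact (partNorm_le_norm _).trans (norm_stopAt_le_partNorm hτ0.le _)

end Contraction

section Solutions

omit [NormedSpace ℝ E]

variable {a b r Q s τ : ℝ}

theorem ContractsOnWindow.exists_solution_near {Ψ : C(Icc a b, E) → C(Icc a b, E)}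
    (hΨc : ContractsOnWindow Ψ r Q s τ) (hΨ : IsVolterra a b Ψ) (hQ0 : 0 ≤ Q) (hQ1 : Q < 1) (hs : 0 ≤ s)
    (hsτ : s ≤ τ) (hτb : τ < b - a) {v : C(Icc a b, E)} (hv : s = 0 ∨ eqUpTo a b s (Ψ v) v)
    (hvr : ‖v‖ + 1 ≤ r) (hvΨ : ‖stopAt τ (Ψ v) - v‖ ≤ 1 - Q) :
    ∃ z, eqUpTo a b τ (Ψ z) z ∧ ‖z - v‖ ≤ ‖stopAt τ (Ψ v) - v‖ / (1 - Q) := by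
  set S := {y | s = 0} ∪ {y | eqUpTo a b s y v}
  have hS : IsClosed S := isClosed_const.union (isClosed_setOf_eqUpTo v)
  have hmaps : MapsTo (fun y => stopAt τ (Ψ y)) S S := by
    intro y hy
    by_cases hs0 : s = 0
    · exact Or.inl hs0
    refine Or.inr fun t ht => ?_
    rw [stopAt_apply_of_le _ (ht.trans (by linarith)),
      hΨ s ⟨lt_of_le_of_ne hs (Ne.symm hs0), by linarith⟩ y v (hy.resolve_left hs0) t ht,
      hv.resolve_left hs0 t ht]
  have hcontr : ∀ x ∈ S, ∀ y ∈ S, dist x v ≤ 1 → dist y v ≤ 1 →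
      dist (stopAt τ (Ψ x)) (stopAt τ (Ψ y)) ≤ Q * dist x y := by
    intro x hx y hy hxv hyv
    have hnorm : ∀ x : C(Icc a b, E), dist x v ≤ 1 → ‖x‖ ≤ r := fun x hxv => by
      rw [dist_eq_norm] at hxv
      linarith [norm_le_insert' x v]
    have hagree : s = 0 ∨ eqUpTo a b s x y :=
      hx.elim Or.inl fun hx => hy.imp id fun hy t ht => (hx t ht).trans (hy t ht).symm
    rw [dist_eq_norm, dist_eq_norm, ← stopAt_sub]
    calc ‖stopAt τ (Ψ x - Ψ y)‖ ≤ partNorm a b τ (Ψ x - Ψ y) :=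
          norm_stopAt_le_partNorm (hs.trans hsτ) _
      _ ≤ Q * partNorm a b τ (x - y) := hΨc x y (hnorm x hxv) (hnorm y hyv) hagree
      _ ≤ Q * ‖x - y‖ := by gcongr; exact partNorm_le_norm _
  obtain ⟨z, hz, hzv⟩ := exists_fixedPoint_near hS hmaps (Or.inr fun _ _ => rfl) hQ0 hQ1 hcontr
    (by rwa [dist_eq_norm, mul_one])
  refine ⟨z, fun t ht => ?_, by simpa only [dist_eq_norm] using hzv⟩
  rw [← stopAt_apply_of_le (Ψ z) ht, hz]

variable {Λ : Type*} [TopologicalSpace Λ] {F : C(Icc a b, E) → Λ → C(Icc a b, E)} {lam₀ : Λ}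

theorem exists_solutions_tendsto (hVol : ∀ lam, IsVolterra a b (F · lam))
    (hwin : ∀ᶠ lam in 𝓝 lam₀, ContractsOnWindow (F · lam) r Q s τ) (hQ0 : 0 ≤ Q) (hQ1 : Q < 1)
    (hs : 0 ≤ s) (hsτ : s ≤ τ) (hτb : τ < b - a) {w : C(Icc a b, E)} (hwr : ‖w‖ + 1 < r)
    (hcont : ContinuousAt (fun p : C(Icc a b, E) × Λ => F p.1 p.2) (w, lam₀))
    (hw : stopAt τ (F w lam₀) = w) {v : Λ → C(Icc a b, E)} (hv : Tendsto v (𝓝 lam₀) (𝓝 w))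
    (hvsol : ∀ᶠ lam in 𝓝 lam₀, s = 0 ∨ eqUpTo a b s (F (v lam) lam) (v lam)) :
    ∃ sol : Λ → C(Icc a b, E), (∀ᶠ lam in 𝓝 lam₀, eqUpTo a b τ (F (sol lam) lam) (sol lam)) ∧
      Tendsto sol (𝓝 lam₀) (𝓝 w) := by
  set defect := fun lam => ‖stopAt τ (F (v lam) lam) - v lam‖
  have hdefect : Tendsto defect (𝓝 lam₀) (𝓝 0) := by
    have hFv : Tendsto (fun lam => stopAt τ (F (v lam) lam)) (𝓝 lam₀) (𝓝 w) := by
      rw [← hw]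
      exact (continuous_stopAt.tendsto _).comp (hcont.tendsto.comp (hv.prodMk_nhds tendsto_id))
    simpa using (hFv.sub hv).norm
  have hex : ∀ᶠ lam in 𝓝 lam₀,
      ∃ z, eqUpTo a b τ (F z lam) z ∧ ‖z - v lam‖ ≤ defect lam / (1 - Q) := by
    filter_upwards [hwin, hvsol, hv.norm.eventually (gt_mem_nhds (by linarith : ‖w‖ < r - 1)),
      hdefect.eventually (ge_mem_nhds (by linarith : (0 : ℝ) < 1 - Q))] with lam hc hsol hr hd
    exact hc.exists_solution_near (hVol lam) hQ0 hQ1 hs hsτ hτb hsol (by linarith) hd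
  obtain ⟨sol, hsol⟩ := Filter.skolem.1 hex
  refine ⟨sol, hsol.mono fun _ h => h.1, tendsto_iff_norm_sub_tendsto_zero.2 ?_⟩
  have hbound : Tendsto (fun lam => defect lam / (1 - Q) + ‖v lam - w‖) (𝓝 lam₀) (𝓝 0) := by
    simpa using (hdefect.div_const (1 - Q)).add (tendsto_iff_norm_sub_tendsto_zero.1 hv)
  refine squeeze_zero' (.of_forall fun _ => norm_nonneg _) (hsol.mono fun lam h => ?_) hbound
  calc ‖sol lam - w‖ ≤ ‖sol lam - v lam‖ + ‖v lam - w‖ := norm_sub_le_norm_sub_add_norm_sub _ _ _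
    _ ≤ defect lam / (1 - Q) + ‖v lam - w‖ := by gcongr; exact h.2

def HasConvergingSolutions (F : C(Icc a b, E) → Λ → C(Icc a b, E)) (lam₀ : Λ)
    (Y₀ : C(Icc a b, E)) (s : ℝ) : Prop :=
  ∃ sol : Λ → C(Icc a b, E), (∀ᶠ lam in 𝓝 lam₀, eqUpTo a b s (F (sol lam) lam) (sol lam)) ∧
    Tendsto sol (𝓝 lam₀) (𝓝 (stopAt s Y₀))

theorem hasConvergingSolutions_extend {Y₀ : C(Icc a b, E)} (hVol : ∀ lam, IsVolterra a b (F · lam))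
    (hwin : ∀ᶠ lam in 𝓝 lam₀, ContractsOnWindow (F · lam) r Q s τ) (hQ0 : 0 ≤ Q) (hQ1 : Q < 1)
    (hs : 0 ≤ s) (hsτ : s ≤ τ) (hτ0 : 0 < τ) (hτb : τ < b - a) (hY₀r : ‖Y₀‖ + 1 < r)
    (hcont : ContinuousAt (fun p : C(Icc a b, E) × Λ => F p.1 p.2) (stopAt τ Y₀, lam₀))
    (hY₀ : eqUpTo a b τ (F Y₀ lam₀) Y₀) (hprev : s = 0 ∨ HasConvergingSolutions F lam₀ Y₀ s) :
    HasConvergingSolutions F lam₀ Y₀ τ := by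
  have hw : stopAt τ (F (stopAt τ Y₀) lam₀) = stopAt τ Y₀ := stopAt_congr hτ0.le fun t ht =>
    (hVol lam₀ τ ⟨hτ0, hτb⟩ _ _ (fun u hu => stopAt_apply_of_le Y₀ hu) t ht).trans (hY₀ t ht)
  have hwr : ‖stopAt τ Y₀‖ + 1 < r := by linarith [norm_stopAt_le hτ0.le Y₀]
  suffices ∃ v : Λ → C(Icc a b, E), Tendsto v (𝓝 lam₀) (𝓝 (stopAt τ Y₀)) ∧
      ∀ᶠ lam in 𝓝 lam₀, s = 0 ∨ eqUpTo a b s (F (v lam) lam) (v lam) by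
    obtain ⟨v, hv, hvsol⟩ := this
    exact exists_solutions_tendsto hVol hwin hQ0 hQ1 hs hsτ hτb hwr hcont hw hv hvsol
  rcases hprev with hs0 | ⟨sol, hsol, hlim⟩
  · exact ⟨fun _ => stopAt τ Y₀, tendsto_const_nhds, .of_forall fun _ => Or.inl hs0⟩
  have hshift : ∀ y, eqUpTo a b s (y + (stopAt τ Y₀ - stopAt s Y₀)) y := fun y t ht => by
    simp [stopAt_apply_of_le _ ht, stopAt_apply_of_le _ (ht.trans (by linarith) : (t : ℝ) ≤ a + τ)]
  refine ⟨fun lam => sol lam + (stopAt τ Y₀ - stopAt s Y₀),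
    by simpa using hlim.add_const (stopAt τ Y₀ - stopAt s Y₀), hsol.mono fun lam h => ?_⟩
  by_cases hs0 : s = 0
  · exact Or.inl hs0
  refine Or.inr fun t ht => ?_
  rw [hVol lam s ⟨lt_of_le_of_ne hs (Ne.symm hs0), by linarith⟩ _ _ (hshift _) t ht, h t ht,
    hshift _ t ht]

end Solutions

section Extension

omit [NormedSpace ℝ E] [CompleteSpace E]

variable {a b γ : ℝ}

theorem isLocalSolution_comp_projIcc (hab : a ≤ b) {Ψ : C(Icc a b, E) → C(Icc a b, E)}
    {y : C(Icc a b, E)} (hγ0 : 0 < γ) (hγb : γ ≤ b - a) (h : eqUpTo a b γ (Ψ y) y) :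
    IsLocalSolution a b γ Ψ (fun t => y (projIcc a b hab t)) :=
  ⟨hγ0, hγb, (y.continuous.comp continuous_projIcc).continuousOn, y,
    fun t _ => by simp only [projIcc_val], fun t ht => by simp only [projIcc_val, h t ht]⟩

theorem sSup_image_Icc_eq_partNorm {g : ℝ → E} {y : C(Icc a b, E)} (hγb : γ ≤ b - a)
    (h : ∀ t : Icc a b, (t : ℝ) ≤ a + γ → y t = g t) :
    sSup ((fun t => ‖g t‖) '' Icc a (a + γ)) = partNorm a b γ y := by
  unfold partNorm
  congr 1
  ext x
  constructor
  · rintro ⟨t, ⟨hat, htγ⟩, rfl⟩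
    exact ⟨⟨t, hat, by linarith⟩, htγ, congrArg norm (h _ htγ)⟩
  · rintro ⟨t, ht, rfl⟩
    exact ⟨t, ⟨t.2.1, ht⟩, congrArg norm (h t ht).symm⟩

theorem tendsto_sSup_image_Icc_of_tendsto_stopAt (hab : a ≤ b) {ι : Type*} {l : Filter ι}
    {sol : ι → C(Icc a b, E)} {Y₀ : C(Icc a b, E)} {y₀ : ℝ → E} (hγb : γ ≤ b - a)
    (hY₀ : ∀ t : Icc a b, (t : ℝ) ≤ a + γ → Y₀ t = y₀ t)
    (hlim : Tendsto sol l (𝓝 (stopAt γ Y₀))) :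
    Tendsto (fun i => sSup ((fun t => ‖sol i (projIcc a b hab t) - y₀ t‖) '' Icc a (a + γ)))
      l (𝓝 0) := by
  have hsup : ∀ i, sSup ((fun t => ‖sol i (projIcc a b hab t) - y₀ t‖) '' Icc a (a + γ)) =
      partNorm a b γ (sol i - stopAt γ Y₀) := fun i =>
    sSup_image_Icc_eq_partNorm hγb fun t ht => by
      rw [ContinuousMap.sub_apply, projIcc_val, stopAt_apply_of_le Y₀ ht, hY₀ t ht]
  simp_rw [hsup]
  exact squeeze_zero (fun _ => partNorm_nonneg _) (fun _ => partNorm_le_norm _)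
    (tendsto_iff_norm_sub_tendsto_zero.1 hlim)

end Extension

theorem maxExt_solution_continuous_dependence_general
    {Λ : Type*} [MetricSpace Λ] (lam₀ : Λ)
    (a b q : ℝ) (hq : q < 1)
    (F : C(Set.Icc a b, E) → Λ → C(Set.Icc a b, E))
    (hVol : ∀ lam : Λ, IsVolterra a b (fun y => F y lam))
    (U₀ : Set Λ) (hU₀ : U₀ ∈ 𝓝 lam₀)
    (hULC : IsUniformlyLocallyContracting a b q U₀ F)
    (hcont : ∀ y : C(Set.Icc a b, E),
      ContinuousAt (fun p : C(Set.Icc a b, E) × Λ => F p.1 p.2) (y, lam₀))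
    (ζ : ℝ) (y₀ : ℝ → E) (hy₀ : IsMaxExtSolution a b ζ (fun y => F y lam₀) y₀) :
    ∀ γ ∈ Set.Ioo (0:ℝ) ζ, ∃ U ∈ 𝓝 lam₀, ∃ sol : Λ → ℝ → E,
      (∀ lam ∈ U, IsLocalSolution a b γ (fun y => F y lam) (sol lam)) ∧
      Tendsto (fun lam => sSup ((fun t => ‖sol lam t - y₀ t‖) '' Set.Icc a (a + γ)))
        (𝓝 lam₀) (𝓝 0) := by
  intro γ hγ
  obtain ⟨-, hζb, hloc, -⟩ := hy₀
  obtain ⟨hγ0, -, -, Y₀, hY₀, hFY₀⟩ := hloc γ hγ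
  have hγb : γ < b - a := hγ.2.trans_le hζb
  have hab : a ≤ b := by linarith
  have hQ0 : 0 ≤ max q 0 := le_max_right q 0
  obtain ⟨δ, hδ, hwin⟩ := (hULC.mono (le_max_left q 0)).exists_contractsOnWindow hVol hQ0
    (by positivity : 0 < ‖Y₀‖ + 2)
  have hfix : eqUpTo a b γ (F Y₀ lam₀) Y₀ := fun t ht => (hFY₀ t ht).trans (hY₀ t ht).symm
  obtain ⟨sol, hsol, hlim⟩ : HasConvergingSolutions F lam₀ Y₀ γ :=
    forall_mem_Ioc_of_step hδ (fun s τ hs hsτ hτs hτ => hasConvergingSolutions_extend hVol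
      (mem_of_superset hU₀ fun lam hlam => hwin lam hlam s τ hs hsτ hτs hτ.1 (by linarith [hτ.2]))
      hQ0 (max_lt hq one_pos) hs hsτ hτ.1 (by linarith [hτ.2]) (by linarith) (hcont _)
      (hfix.mono hτ.2)) γ ⟨hγ0, le_rfl⟩
  exact ⟨_, hsol, fun lam t => sol lam (projIcc a b hab t),
    fun lam hlam => isLocalSolution_comp_projIcc hab hγ0 hγb.le hlam,
    tendsto_sSup_image_Icc_of_tendsto_stopAt hab hγb.le hY₀ hlim⟩

/-- Theorem 2.1, continuous dependence on the parameter: maximally extended case. -/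
theorem maxExt_solution_continuous_dependence
    {Λ : Type*} [MetricSpace Λ] (lam₀ : Λ)
    (a b q : ℝ) (hab : a < b) (hq : q < 1)
    (F : C(Set.Icc a b, E) → Λ → C(Set.Icc a b, E))
    (hVol : ∀ lam : Λ, IsVolterra a b (fun y => F y lam))
    (U₀ : Set Λ) (hU₀ : U₀ ∈ 𝓝 lam₀)
    (hULC : IsUniformlyLocallyContracting a b q U₀ F)
    (hcont : ∀ y : C(Set.Icc a b, E),
      ContinuousAt (fun p : C(Set.Icc a b, E) × Λ => F p.1 p.2) (y, lam₀))
    (ζ : ℝ) (y₀ : ℝ → E) (hy₀ : IsMaxExtSolution a b ζ (fun y => F y lam₀) y₀) :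
    ∀ γ ∈ Set.Ioo (0:ℝ) ζ, ∃ U ∈ 𝓝 lam₀, ∃ sol : Λ → ℝ → E,
      (∀ lam ∈ U, IsLocalSolution a b γ (fun y => F y lam) (sol lam)) ∧
      Tendsto (fun lam => sSup ((fun t => ‖sol lam t - y₀ t‖) '' Set.Icc a (a + γ)))
        (𝓝 lam₀) (𝓝 0) :=
  maxExt_solution_continuous_dependence_general lam₀ a b q hq F hVol U₀ hU₀ hULC hcont ζ y₀ hy₀
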